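/- Every finite BCK-algebra is nilpotent: defining the lower central series by A₁ = subalgebra generated by all pseudo-commutators [x,y], and A_{k+1} = subalgebra generated by all [x,y] with x ∈ A_k, y ∈ A, there exists n with A_n = {0}. -/
import Mathlib


/-- A BCK-algebra: a set with binary operation `op` and constant `0`. -/
class BCK (A : Type*) extends Zero A where
  op : A → A → A
  ax1 : ∀ x y z : A, op (op (op x y) (op x z)) (op z y) = 0
  ax2 : ∀ x y : A, op (op x (op x y)) y = 0
  ax3 : ∀ x : A, op x x = 0
  ax4 : ∀ x : A, op 0 x = 0
  ax5 : ∀ x y : A, op x y = 0 → op y x = 0 → x = y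

namespace BCK
variable {A : Type*} [BCK A]

/-- `x ∧ y := y · (y · x)` -/
def meet (x y : A) : A := op y (op y x)

/-- pseudo-commutator `[x,y] := (x ∧ y) · (y ∧ x)` -/
def pcomm (x y : A) : A := op (meet x y) (meet y x)

end BCK
namespace BCK
variable {A : Type*} [BCK A]

/-- Membership in the subalgebra generated by a subset. -/
inductive clos (S : Set A) : A → Prop
  | base {x : A} : x ∈ S → clos S x
  | mul {x y : A} : clos S x → clos S y → clos S (op x y)

/-- The lower central series: A₀ = A, A_{k+1} = [A_k, A], the subalgebra generated
by all pseudo-commutators [x,y] with x ∈ A_k, y ∈ A.  In particular A₁ = [A,A]. -/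
def lcs : ℕ → Set A
  | 0 => Set.univ
  | n + 1 => {a | clos {z | ∃ x ∈ lcs n, ∃ y : A, z = pcomm x y} a}

end BCK

namespace BCK
variable {A : Type*} [BCK A]

lemma op_zero (x : A) : op x 0 = x := by
  have h2 : op x (op x 0) = 0 := ax5 _ _ (ax2 x 0) (ax4 _)
  have h1 : op (op x 0) x = 0 := by
    have := ax2 x x
    rwa [ax3 x] at this
  exact ax5 _ _ h1 h2

lemma le_trans' {a b c : A} (hab : op a b = 0) (hbc : op b c = 0) : op a c = 0 := by
  have := ax1 a c b
  rwa [hab, hbc, op_zero, op_zero] at this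

lemma op_le_left (a b : A) : op (op a b) a = 0 := by
  have := ax1 a b 0
  rwa [op_zero, ax4, op_zero] at this

lemma meet_le_left (x y : A) : op (meet x y) x = 0 := ax2 y x

lemma meet_le_right (x y : A) : op (meet x y) y = 0 := op_le_left y (op y x)

lemma pcomm_le (x y : A) : op (pcomm x y) x = 0 :=
  le_trans' (op_le_left (meet x y) (meet y x)) (meet_le_left x y)

lemma pcomm_zero (y : A) : pcomm 0 y = 0 := by
  have h1 : meet (0 : A) y = 0 := by rw [meet, op_zero, ax3]
  have h2 : meet y (0 : A) = 0 := by rw [meet, ax4]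
  rw [pcomm, h1, ax4]

lemma pcomm_ne {x : A} (hx : x ≠ 0) (y : A) : pcomm x y ≠ x := by
  intro h
  have hm : meet x y = x := by
    apply ax5
    · exact meet_le_left x y
    · have h0 : op (pcomm x y) (meet x y) = 0 := op_le_left (meet x y) (meet y x)
      rwa [h] at h0
  have hxy : op x y = 0 := by
    have := meet_le_right x y
    rwa [hm] at this
  have hmyx : meet y x = x := by rw [meet, hxy, op_zero]
  have hz : pcomm x y = 0 := by rw [pcomm, hm, hmyx, ax3]
  exact hx (h ▸ hz)

/-- elements strictly below `a` -/
def below (a : A) : Set A := {y | op y a = 0 ∧ y ≠ a}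

/-- height of `a`: number of elements strictly below it -/
noncomputable def ht (a : A) : ℕ := (below a).ncard

lemma below_mono {a b : A} (h : op a b = 0) : below a ⊆ below b := by
  rintro y ⟨h1, h2⟩
  refine ⟨le_trans' h1 h, ?_⟩
  rintro rfl
  exact h2 (ax5 a y h h1).symm

lemma ht_le [Finite A] {a b : A} (h : op a b = 0) : ht a ≤ ht b :=
  Set.ncard_le_ncard (below_mono h) (Set.toFinite _)

lemma ht_lt [Finite A] {a b : A} (h : op a b = 0) (hne : a ≠ b) : ht a < ht b := by
  apply Set.ncard_lt_ncard _ (Set.toFinite _)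
  refine ⟨below_mono h, fun hsub => ?_⟩
  have : a ∈ below b := ⟨h, hne⟩
  have := hsub this
  exact this.2 rfl

lemma ht_lt_card [Finite A] (a : A) : ht a < Nat.card A := by
  have : below a ⊂ Set.univ := by
    refine ⟨Set.subset_univ _, fun hsub => ?_⟩
    have : a ∈ below a := hsub (Set.mem_univ a)
    exact this.2 rfl
  have := Set.ncard_lt_ncard this Set.finite_univ
  rwa [Set.ncard_univ] at this

lemma clos_le {S : Set A} {a : A} (h : clos S a) : ∃ s ∈ S, op a s = 0 := by
  induction h with
  | base hx => exact ⟨_, hx, ax3 _⟩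
  | mul hx hy ihx ihy =>
    obtain ⟨s, hs, hle⟩ := ihx
    exact ⟨s, hs, le_trans' (op_le_left _ _) hle⟩

lemma zero_mem_lcs : ∀ n : ℕ, (0 : A) ∈ lcs n
  | 0 => Set.mem_univ 0
  | n + 1 => clos.base ⟨0, zero_mem_lcs n, 0, (pcomm_zero 0).symm⟩

lemma descent [Finite A] (k : ℕ) : ∀ a : A, a ∈ lcs k → a ≠ 0 → ht a + k < Nat.card A := by
  induction k with
  | zero => intro a _ _; simpa using ht_lt_card a
  | succ k ih =>
    intro a ha hane
    obtain ⟨s, ⟨x, hx, y, rfl⟩, hle⟩ := clos_le ha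
    by_cases hx0 : x = 0
    · subst hx0
      rw [pcomm_zero] at hle
      rw [op_zero] at hle
      exact absurd hle hane
    · have h1 : ht a ≤ ht (pcomm x y) := ht_le hle
      have h2 : ht (pcomm x y) < ht x := ht_lt (pcomm_le x y) (pcomm_ne hx0 y)
      have h3 := ih x hx hx0
      omega

end BCK

/-- Every finite BCK-algebra is nilpotent: some term of the lower central series
is {0}. -/
theorem finite_nilpotent {A : Type*} [BCK A] [Finite A] :
    ∃ n : ℕ, BCK.lcs n = ({0} : Set A) := by
  refine ⟨Nat.card A, ?_⟩
  ext a
  simp only [Set.mem_singleton_iff]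
  constructor
  · intro ha
    by_contra hne
    have := BCK.descent (Nat.card A) a ha hne
    omega
  · rintro rfl
    exact BCK.zero_mem_lcs _
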